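/- arXiv:1802.00246 — 6 statements merged into one kernel-verified Lean document; each statement's English description precedes it below -/
import Mathlib

section
/- The binary operation ⊕ on F³ defined by z₁ = x₁y₁ + c₃(x₂y₃ + x₃y₂) + c₁c₃x₃y₃, z₂ = x₁y₂ + x₂y₁ + c₂(x₂y₃ + x₃y₂) + (c₁c₂ + c₃)x₃y₃, z₃ = x₂y₂ + x₁y₃ + x₃y₁ + c₁(x₂y₃ + x₃y₂) + (c₁² + c₂)x₃y₃ is associative. -/
/-- The group law `⊕` on `F³` (encoded as `F × F × F`). -/
def oplus {F : Type*} [CommRing F] (c₁ c₂ c₃ : F) (x y : F × F × F) : F × F × F :=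
  ⟨x.1 * y.1 + c₃ * (x.2.1 * y.2.2 + x.2.2 * y.2.1) + c₁ * c₃ * (x.2.2 * y.2.2),
   x.1 * y.2.1 + x.2.1 * y.1 + c₂ * (x.2.1 * y.2.2 + x.2.2 * y.2.1)
     + (c₁ * c₂ + c₃) * (x.2.2 * y.2.2),
   x.2.1 * y.2.1 + x.1 * y.2.2 + x.2.2 * y.1 + c₁ * (x.2.1 * y.2.2 + x.2.2 * y.2.1)
     + (c₁ ^ 2 + c₂) * (x.2.2 * y.2.2)⟩

/-- The cubic form `Q`. -/
def Qf {F : Type*} [CommRing F] (c₁ c₂ c₃ : F) (x : F × F × F) : F :=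
  -c₂ * x.1 * x.2.1 ^ 2 + (c₂ ^ 2 - 2 * (c₁ * c₃)) * x.1 * x.2.2 ^ 2
    + c₁ * x.1 ^ 2 * x.2.1 + (c₁ ^ 2 + 2 * c₂) * x.1 ^ 2 * x.2.2
    - (c₂ * c₃) * x.2.1 * x.2.2 ^ 2 + (c₁ * c₃) * x.2.1 ^ 2 * x.2.2
    - (c₁ * c₂ + 3 * c₃) * x.1 * x.2.1 * x.2.2
    + x.1 ^ 3 + c₃ * x.2.1 ^ 3 + c₃ ^ 2 * x.2.2 ^ 3

/-- `n`-fold `⊕`-power. -/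
def opow {F : Type*} [CommRing F] (c₁ c₂ c₃ : F) : ℕ → F × F × F → F × F × F
  | 0, _ => (1, 0, 0)
  | n + 1, x => oplus c₁ c₂ c₃ x (opow c₁ c₂ c₃ n x)

-- `⊕` is multiplication in `F[t]/(t³ - c₁t² - c₂t - c₃)` in the basis `1, t, t²`, so associativity
-- is a polynomial identity in the coordinates.
theorem stmt4 {F : Type*} [CommRing F] (c₁ c₂ c₃ : F) :
    ∀ x y z : F × F × F,
      oplus c₁ c₂ c₃ (oplus c₁ c₂ c₃ x y) z = oplus c₁ c₂ c₃ x (oplus c₁ c₂ c₃ y z) := by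
  intro x y z
  ext <;> simp only [oplus] <;> ring
end

section
/- Define Q(x₁,x₂,x₃) = -c₂x₁x₂² + (c₂² - 2c₁c₃)x₁x₃² + c₁x₁²x₂ + (c₁² + 2c₂)x₁²x₃ - c₂c₃x₂x₃² + c₁c₃x₂²x₃ - (c₁c₂ + 3c₃)x₁x₂x₃ + x₁³ + c₃x₂³ + c₃²x₃³. Then for all x, y ∈ F³, Q(x ⊕ y) = Q(x)·Q(y), where ⊕ is the operation z₁ = x₁y₁ + c₃(x₂y₃ + x₃y₂) + c₁c₃x₃y₃, z₂ = x₁y₂ + x₂y₁ + c₂(x₂y₃ + x₃y₂) + (c₁c₂ + c₃)x₃y₃, z₃ = x₂y₂ + x₁y₃ + x₃y₁ + c₁(x₂y₃ + x₃y₂) + (c₁² + c₂)x₃y₃. -/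
/-- The matrix of `y ↦ x ⊕ y`: its `j`-th column is `x ⊕ eⱼ`. -/
def oplusMatrix {F : Type*} [CommRing F] (c₁ c₂ c₃ : F) (x : F × F × F) : Matrix (Fin 3) (Fin 3) F :=
  !![x.1, c₃ * x.2.2, c₃ * x.2.1 + c₁ * c₃ * x.2.2;
     x.2.1, x.1 + c₂ * x.2.2, c₂ * x.2.1 + (c₁ * c₂ + c₃) * x.2.2;
     x.2.2, x.2.1 + c₁ * x.2.2, x.1 + c₁ * x.2.1 + (c₁ ^ 2 + c₂) * x.2.2]

section

variable {F : Type*} [CommRing F] (c₁ c₂ c₃ : F)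

theorem oplusMatrix_oplus (x y : F × F × F) :
    oplusMatrix c₁ c₂ c₃ (oplus c₁ c₂ c₃ x y) = oplusMatrix c₁ c₂ c₃ x * oplusMatrix c₁ c₂ c₃ y := by
  simp only [oplusMatrix, oplus, Matrix.mul_fin_three, EmbeddingLike.apply_eq_iff_eq,
    Matrix.vecCons_inj, and_true]
  refine ⟨⟨?_, ?_, ?_⟩, ⟨?_, ?_, ?_⟩, ⟨?_, ?_, ?_⟩⟩ <;> ring

theorem det_oplusMatrix (x : F × F × F) : (oplusMatrix c₁ c₂ c₃ x).det = Qf c₁ c₂ c₃ x := by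
  simp only [oplusMatrix, Qf, Matrix.det_fin_three, Matrix.of_apply, Matrix.cons_val',
    Matrix.cons_val_zero, Matrix.cons_val_fin_one, Matrix.cons_val_one, Matrix.cons_val]
  ring

end

theorem stmt6 {F : Type*} [CommRing F] (c₁ c₂ c₃ : F) :
    ∀ x y : F × F × F,
      Qf c₁ c₂ c₃ (oplus c₁ c₂ c₃ x y) = Qf c₁ c₂ c₃ x * Qf c₁ c₂ c₃ y := by
  intro x y
  rw [← det_oplusMatrix, oplusMatrix_oplus, Matrix.det_mul, det_oplusMatrix, det_oplusMatrix]
end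

section
/- For x ∈ F³ with Q(x) ≠ 0, the element y given by y₁ = (c₁x₁x₂ + (c₁² + 2c₂)x₁x₃ - (c₃ + c₁c₂)x₂x₃ + x₁² - c₂x₂² + (c₂² - c₁c₃)x₃²)/Q(x), y₂ = -(x₁x₂ + c₁²x₂x₃ + c₁x₂² - (c₁c₂ + c₃)x₃²)/Q(x), y₃ = (-x₁x₃ + c₁x₂x₃ + x₂² - c₂x₃²)/Q(x) satisfies x ⊕ y = (1,0,0). -/
def cubicAdjugate {F : Type*} [CommRing F] (c₁ c₂ c₃ : F) (x : F × F × F) : F × F × F :=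
  ⟨c₁ * x.1 * x.2.1 + (c₁ ^ 2 + 2 * c₂) * x.1 * x.2.2
      - (c₃ + c₁ * c₂) * x.2.1 * x.2.2 + x.1 ^ 2 - c₂ * x.2.1 ^ 2
      + (c₂ ^ 2 - c₁ * c₃) * x.2.2 ^ 2,
   -(x.1 * x.2.1 + c₁ ^ 2 * x.2.1 * x.2.2 + c₁ * x.2.1 ^ 2 - (c₁ * c₂ + c₃) * x.2.2 ^ 2),
   -(x.1 * x.2.2) + c₁ * x.2.1 * x.2.2 + x.2.1 ^ 2 - c₂ * x.2.2 ^ 2⟩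

section CommRing

variable {F : Type*} [CommRing F] (c₁ c₂ c₃ : F)

theorem oplus_cubicAdjugate (x : F × F × F) :
    oplus c₁ c₂ c₃ x (cubicAdjugate c₁ c₂ c₃ x) = (Qf c₁ c₂ c₃ x, 0, 0) := by
  obtain ⟨a, b, c⟩ := x
  simp only [oplus, cubicAdjugate, Qf, Prod.mk.injEq]
  refine ⟨?_, ?_, ?_⟩ <;> ring

theorem oplus_smul_right (r : F) (x y : F × F × F) :
    oplus c₁ c₂ c₃ x (r • y) = r • oplus c₁ c₂ c₃ x y := by
  obtain ⟨a, b, c⟩ := y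
  simp only [oplus, Prod.smul_mk, smul_eq_mul, Prod.mk.injEq]
  refine ⟨?_, ?_, ?_⟩ <;> ring

end CommRing

theorem oplus_inv_smul_cubicAdjugate {F : Type*} [Field F] (c₁ c₂ c₃ : F) (x : F × F × F)
    (hx : Qf c₁ c₂ c₃ x ≠ 0) :
    oplus c₁ c₂ c₃ x ((Qf c₁ c₂ c₃ x)⁻¹ • cubicAdjugate c₁ c₂ c₃ x) = (1, 0, 0) := by
  rw [oplus_smul_right, oplus_cubicAdjugate, Prod.smul_mk, Prod.smul_mk, smul_eq_mul,
    inv_mul_cancel₀ hx, smul_zero]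

theorem stmt7 {F : Type*} [Field F] (c₁ c₂ c₃ : F) (x : F × F × F)
    (hx : Qf c₁ c₂ c₃ x ≠ 0) :
    oplus c₁ c₂ c₃ x
      ⟨(c₁ * x.1 * x.2.1 + (c₁ ^ 2 + 2 * c₂) * x.1 * x.2.2
          - (c₃ + c₁ * c₂) * x.2.1 * x.2.2 + x.1 ^ 2 - c₂ * x.2.1 ^ 2
          + (c₂ ^ 2 - c₁ * c₃) * x.2.2 ^ 2) / Qf c₁ c₂ c₃ x,
       -((x.1 * x.2.1 + c₁ ^ 2 * x.2.1 * x.2.2 + c₁ * x.2.1 ^ 2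
          - (c₁ * c₂ + c₃) * x.2.2 ^ 2) / Qf c₁ c₂ c₃ x),
       (-(x.1 * x.2.2) + c₁ * x.2.1 * x.2.2 + x.2.1 ^ 2 - c₂ * x.2.2 ^ 2)
          / Qf c₁ c₂ c₃ x⟩ = ((1 : F), (0 : F), (0 : F)) := by
  convert oplus_inv_smul_cubicAdjugate c₁ c₂ c₃ x hx using 2
  simp only [cubicAdjugate, Prod.smul_mk, smul_eq_mul, Prod.mk.injEq]
  refine ⟨?_, ?_, ?_⟩ <;> ring
end

section
/- The set {x ∈ F³ : Q(x) ≠ 0}, equipped with the operation ⊕, is an abelian group with identity (1,0,0). -/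
/-! `⊕` is the multiplication of a commutative, associative, unital cubic `F`-algebra written in
coordinates, and `Q x` is the determinant of the multiplication map `y ↦ x ⊕ y`, i.e. the norm
form of that algebra. The group axioms are polynomial identities, `Q` is multiplicative, and an
element of nonzero norm is inverted by its adjugate scaled by `(Q x)⁻¹`. -/

section CommRing

variable {R : Type*} [CommRing R] (c₁ c₂ c₃ : R)

theorem oplus_comm (x y : R × R × R) : oplus c₁ c₂ c₃ x y = oplus c₁ c₂ c₃ y x := by
  simp only [oplus, Prod.mk.injEq]
  refine ⟨by ring, by ring, by ring⟩

theorem oplus_assoc (x y z : R × R × R) :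
    oplus c₁ c₂ c₃ (oplus c₁ c₂ c₃ x y) z = oplus c₁ c₂ c₃ x (oplus c₁ c₂ c₃ y z) := by
  simp only [oplus, Prod.mk.injEq]
  refine ⟨by ring, by ring, by ring⟩

theorem one_oplus (x : R × R × R) : oplus c₁ c₂ c₃ (1, 0, 0) x = x := by
  simp [oplus]

theorem oplus_smul (x y : R × R × R) (r : R) :
    oplus c₁ c₂ c₃ x (r • y) = r • oplus c₁ c₂ c₃ x y := by
  simp only [oplus, Prod.smul_fst, Prod.smul_snd, Prod.smul_mk, smul_eq_mul, Prod.mk.injEq]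
  refine ⟨by ring, by ring, by ring⟩

theorem Qf_one : Qf c₁ c₂ c₃ (1, 0, 0) = 1 := by
  simp [Qf]

theorem Qf_oplus (x y : R × R × R) :
    Qf c₁ c₂ c₃ (oplus c₁ c₂ c₃ x y) = Qf c₁ c₂ c₃ x * Qf c₁ c₂ c₃ y := by
  simp only [Qf, oplus]
  ring

/-- The first column of the adjugate of the matrix of `y ↦ x ⊕ y`. -/
def oplusAdj (x : R × R × R) : R × R × R :=
  ((x.1 + c₂ * x.2.2) * (x.1 + c₁ * x.2.1 + (c₁ ^ 2 + c₂) * x.2.2)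
      - (c₂ * x.2.1 + (c₁ * c₂ + c₃) * x.2.2) * (x.2.1 + c₁ * x.2.2),
    (c₂ * x.2.1 + (c₁ * c₂ + c₃) * x.2.2) * x.2.2
      - x.2.1 * (x.1 + c₁ * x.2.1 + (c₁ ^ 2 + c₂) * x.2.2),
    x.2.1 * (x.2.1 + c₁ * x.2.2) - (x.1 + c₂ * x.2.2) * x.2.2)

theorem oplus_oplusAdj (x : R × R × R) :
    oplus c₁ c₂ c₃ x (oplusAdj c₁ c₂ c₃ x) = (Qf c₁ c₂ c₃ x, 0, 0) := by
  simp only [oplus, oplusAdj, Qf, Prod.mk.injEq]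
  refine ⟨by ring, by ring, by ring⟩

end CommRing

theorem exists_oplus_eq_one {F : Type*} [Field F] (c₁ c₂ c₃ : F) {x : F × F × F}
    (hx : Qf c₁ c₂ c₃ x ≠ 0) :
    ∃ y, Qf c₁ c₂ c₃ y ≠ 0 ∧ oplus c₁ c₂ c₃ x y = (1, 0, 0) := by
  set y := (Qf c₁ c₂ c₃ x)⁻¹ • oplusAdj c₁ c₂ c₃ x
  have hxy : oplus c₁ c₂ c₃ x y = (1, 0, 0) := by
    simp [y, oplus_smul, oplus_oplusAdj, hx]
  have hQ : Qf c₁ c₂ c₃ x * Qf c₁ c₂ c₃ y = 1 := by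
    rw [← Qf_oplus, hxy, Qf_one]
  exact ⟨y, right_ne_zero_of_mul_eq_one hQ, hxy⟩

/-- `({x : F³ | Q x ≠ 0}, ⊕)` is an abelian group with identity `(1,0,0)`:
closure, associativity, commutativity, identity, and inverses. -/
theorem stmt8 {F : Type*} [Field F] (c₁ c₂ c₃ : F) :
    (∀ x y : F × F × F, Qf c₁ c₂ c₃ x ≠ 0 → Qf c₁ c₂ c₃ y ≠ 0 →
        Qf c₁ c₂ c₃ (oplus c₁ c₂ c₃ x y) ≠ 0) ∧
    (∀ x y z : F × F × F,
        oplus c₁ c₂ c₃ (oplus c₁ c₂ c₃ x y) z = oplus c₁ c₂ c₃ x (oplus c₁ c₂ c₃ y z)) ∧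
    (∀ x y : F × F × F, oplus c₁ c₂ c₃ x y = oplus c₁ c₂ c₃ y x) ∧
    Qf c₁ c₂ c₃ ((1 : F), (0 : F), (0 : F)) ≠ 0 ∧
    (∀ x : F × F × F, oplus c₁ c₂ c₃ ((1 : F), (0 : F), (0 : F)) x = x) ∧
    (∀ x : F × F × F, Qf c₁ c₂ c₃ x ≠ 0 →
        ∃ y : F × F × F, Qf c₁ c₂ c₃ y ≠ 0 ∧
          oplus c₁ c₂ c₃ x y = ((1 : F), (0 : F), (0 : F))) :=
  ⟨fun x y hx hy => by rw [Qf_oplus]; exact mul_ne_zero hx hy,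
    oplus_assoc c₁ c₂ c₃, oplus_comm c₁ c₂ c₃, by rw [Qf_one]; exact one_ne_zero,
    one_oplus c₁ c₂ c₃, fun _ => exists_oplus_eq_one c₁ c₂ c₃⟩
end

section
/- If χ(X) = X³ - c₁X² - c₂X - c₃ factors in F[X] as (X - h)(X² + kX + l) with h, k, l ∈ F, then Q(x) = [x₁² + (k² - 2l)x₁x₃ + l·x₂² - kl·x₂x₃ + l²·x₃² - k·x₁x₂]·[x₁ + h·x₂ + h²·x₃], i.e., the cubic form Q factors as a product of a quadratic form and a linear form. -/
open Polynomial in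
theorem Polynomial.coeffs_eq_of_cubic_eq_mul {R : Type*} [CommRing R] {c₁ c₂ c₃ h k l : R}
    (hfac : X ^ 3 - C c₁ * X ^ 2 - C c₂ * X - C c₃ = (X - C h) * (X ^ 2 + C k * X + C l)) :
    c₁ = h - k ∧ c₂ = h * k - l ∧ c₃ = h * l := by
  have hcubic : (⟨1, -c₁, -c₂, -c₃⟩ : Cubic R).toPoly =
      (⟨1, k - h, l - h * k, -(h * l)⟩ : Cubic R).toPoly := by
    simp only [Cubic.toPoly, map_one, map_neg, map_sub, map_mul, one_mul]
    linear_combination hfac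
  obtain ⟨-, h₁, h₂, h₃⟩ := Cubic.mk.inj ((Cubic.toPoly_injective _ _).mp hcubic)
  exact ⟨by linear_combination -h₁, by linear_combination -h₂, by linear_combination -h₃⟩

theorem Qf_eq_quadratic_mul_linear {R : Type*} [CommRing R] (h k l x₁ x₂ x₃ : R) :
    Qf (h - k) (h * k - l) (h * l) (x₁, x₂, x₃) =
      (x₁ ^ 2 + (k ^ 2 - 2 * l) * x₁ * x₃ + l * x₂ ^ 2 - k * l * x₂ * x₃
        + l ^ 2 * x₃ ^ 2 - k * x₁ * x₂) * (x₁ + h * x₂ + h ^ 2 * x₃) := by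
  simp only [Qf]
  ring

open Polynomial in
theorem stmt14 {F : Type*} [Field F] (c₁ c₂ c₃ h k l : F)
    (hfac : X ^ 3 - C c₁ * X ^ 2 - C c₂ * X - C c₃ =
      (X - C h) * (X ^ 2 + C k * X + C l)) :
    ∀ x₁ x₂ x₃ : F,
      Qf c₁ c₂ c₃ (x₁, x₂, x₃) =
        (x₁ ^ 2 + (k ^ 2 - 2 * l) * x₁ * x₃ + l * x₂ ^ 2 - k * l * x₂ * x₃
          + l ^ 2 * x₃ ^ 2 - k * x₁ * x₂) * (x₁ + h * x₂ + h ^ 2 * x₃) := by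
  obtain ⟨rfl, rfl, rfl⟩ := coeffs_eq_of_cubic_eq_mul hfac
  exact Qf_eq_quadratic_mul_linear h k l
end

section
/- Let F_q be a finite field of characteristic different from 2 and 3, and let χ(X) = X³ - c₁X² - c₂X - c₃ be irreducible over F_q. Then the group G = (F_qP², ⊕) obtained as the quotient of (F_q³ \ {0}, ⊕) by the scalar action of F_q* is cyclic of order q² + q + 1. -/
open Polynomial
open scoped LinearAlgebra.Projectivization

section CubicEmbed

variable {F A : Type*} [CommRing F] [CommRing A] [Algebra F A]

def cubicEmbed (t : A) (x : F × F × F) : A :=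
  algebraMap F A x.1 + algebraMap F A x.2.1 * t + algebraMap F A x.2.2 * t ^ 2

variable {c₁ c₂ c₃ : F} {t : A}

@[simp]
lemma cubicEmbed_zero : cubicEmbed t (0 : F × F × F) = 0 := by
  simp [cubicEmbed]

lemma cubicEmbed_oplus
    (ht : t ^ 3 = algebraMap F A c₁ * t ^ 2 + algebraMap F A c₂ * t + algebraMap F A c₃)
    (x y : F × F × F) :
    cubicEmbed t (oplus c₁ c₂ c₃ x y) = cubicEmbed t x * cubicEmbed t y := by
  simp only [cubicEmbed, oplus, map_add, map_mul, map_pow]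
  -- the naive product has `t³`-coefficient `x₂y₃ + x₃y₂` and `t⁴`-coefficient `x₃y₃`
  linear_combination (-(algebraMap F A x.2.1 * algebraMap F A y.2.2)
    - algebraMap F A x.2.2 * algebraMap F A y.2.1
    - algebraMap F A c₁ * (algebraMap F A x.2.2 * algebraMap F A y.2.2)
    - algebraMap F A x.2.2 * algebraMap F A y.2.2 * t) * ht

lemma cubicEmbed_opow
    (ht : t ^ 3 = algebraMap F A c₁ * t ^ 2 + algebraMap F A c₂ * t + algebraMap F A c₃)
    (n : ℕ) (x : F × F × F) :
    cubicEmbed t (opow c₁ c₂ c₃ n x) = cubicEmbed t x ^ n := by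
  induction n with
  | zero => simp [opow, cubicEmbed]
  | succ n ih => rw [opow, cubicEmbed_oplus ht, ih, pow_succ']

end CubicEmbed

lemma AdjoinRoot.root_cubic_pow_three {F : Type*} [CommRing F] (c₁ c₂ c₃ : F) :
    root (X ^ 3 - C c₁ * X ^ 2 - C c₂ * X - C c₃) ^ 3 =
      algebraMap F _ c₁ * root (X ^ 3 - C c₁ * X ^ 2 - C c₂ * X - C c₃) ^ 2
        + algebraMap F _ c₂ * root (X ^ 3 - C c₁ * X ^ 2 - C c₂ * X - C c₃)
        + algebraMap F _ c₃ := by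
  have h := AdjoinRoot.eval₂_root (X ^ 3 - C c₁ * X ^ 2 - C c₂ * X - C c₃)
  simp only [eval₂_sub, eval₂_mul, eval₂_pow, eval₂_X, eval₂_C] at h
  rw [AdjoinRoot.algebraMap_eq]
  linear_combination h

lemma cubicEmbed_root_bijective {F : Type*} [Field F] {p : F[X]} (hp : p.natDegree = 3) :
    Function.Bijective (cubicEmbed (F := F) (AdjoinRoot.root p)) := by
  have hp0 : p ≠ 0 := by rintro rfl; simp at hp
  let B : Module.Basis (Fin 3) F (AdjoinRoot p) :=
    (AdjoinRoot.powerBasis hp0).basis.reindex (finCongr ((AdjoinRoot.powerBasis_dim hp0).trans hp))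
  have hB : cubicEmbed (AdjoinRoot.root p) =
      B.equivFun.symm ∘ fun x : F × F × F => ![x.1, x.2.1, x.2.2] := by
    ext x
    simp [B, Fin.sum_univ_three, cubicEmbed, Algebra.smul_def]
  rw [hB]
  refine B.equivFun.symm.bijective.comp ⟨fun x y h => ?_, fun w => ⟨(w 0, w 1, w 2), ?_⟩⟩
  · simpa [Matrix.vecCons_inj, Prod.ext_iff] using h
  · ext i; fin_cases i <;> rfl

lemma exists_opow_generator {F K : Type*} [CommRing F] [Finite F] [Field K] [Algebra F K]
    {c₁ c₂ c₃ : F} {t : K}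
    (ht : t ^ 3 = algebraMap F K c₁ * t ^ 2 + algebraMap F K c₂ * t + algebraMap F K c₃)
    (he : Function.Bijective (cubicEmbed (F := F) t)) :
    ∃ g : F × F × F, g ≠ 0 ∧ ∀ h : F × F × F, h ≠ 0 → ∃ n : ℕ, opow c₁ c₂ c₃ n g = h := by
  have : Finite K := Finite.of_surjective _ he.2
  obtain ⟨g₀, hg₀⟩ := IsCyclic.exists_generator (α := Kˣ)
  obtain ⟨g, hg⟩ := he.2 g₀
  refine ⟨g, by rintro rfl; exact g₀.ne_zero (by rw [← hg, cubicEmbed_zero]), fun h hh => ?_⟩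
  have hh' : cubicEmbed t h ≠ 0 := fun h0 => hh (he.1 (by rw [h0, cubicEmbed_zero]))
  obtain ⟨n, hn⟩ := mem_powers_iff_mem_zpowers.mpr (hg₀ (Units.mk0 _ hh'))
  refine ⟨n, he.1 ?_⟩
  rw [cubicEmbed_opow ht, hg, ← Units.val_pow_eq_pow_val]
  exact congrArg Units.val hn

lemma card_quot_smul_eq_card_projectivization {K V : Type*} [DivisionRing K] [AddCommGroup V]
    [Module K V] :
    Nat.card (Quot fun a b : {v : V // v ≠ 0} => ∃ lam : K, lam ≠ 0 ∧ lam • a.val = b.val) =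
      Nat.card (ℙ K V) := by
  refine Nat.card_congr (Quot.congrRight fun a b => ?_)
  show _ ↔ ∃ u : Kˣ, u • b.val = a.val
  constructor
  · rintro ⟨lam, hlam, h⟩
    exact ⟨(Units.mk0 lam hlam)⁻¹, by rw [← h, Units.smul_def, Units.val_inv_eq_inv_val,
      Units.val_mk0, inv_smul_smul₀ hlam]⟩
  · rintro ⟨u, hu⟩
    exact ⟨(u⁻¹ : Kˣ), Units.ne_zero _, by rw [← hu, ← Units.smul_def, inv_smul_smul]⟩

theorem stmt15_general {F : Type*} [Field F] [Fintype F]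
    (c₁ c₂ c₃ : F)
    (hirr : Irreducible (X ^ 3 - C c₁ * X ^ 2 - C c₂ * X - C c₃)) :
    (∃ g : F × F × F, g ≠ 0 ∧ ∀ h : F × F × F, h ≠ 0 →
        ∃ (n : ℕ) (lam : F), lam ≠ 0 ∧ lam • opow c₁ c₂ c₃ n g = h) ∧
    Nat.card (Quot fun a b : {x : F × F × F // x ≠ 0} =>
        ∃ lam : F, lam ≠ 0 ∧ lam • a.val = b.val) =
      Fintype.card F ^ 2 + Fintype.card F + 1 := by
  have hdeg : (X ^ 3 - C c₁ * X ^ 2 - C c₂ * X - C c₃).natDegree = 3 := by compute_degree!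
  have : Fact (Irreducible (X ^ 3 - C c₁ * X ^ 2 - C c₂ * X - C c₃)) := ⟨hirr⟩
  obtain ⟨g, hg0, hg⟩ := exists_opow_generator (AdjoinRoot.root_cubic_pow_three c₁ c₂ c₃)
    (cubicEmbed_root_bijective hdeg)
  refine ⟨⟨g, hg0, fun h hh => ?_⟩, ?_⟩
  · obtain ⟨n, hn⟩ := hg h hh
    exact ⟨n, 1, one_ne_zero, by rw [one_smul, hn]⟩
  · rw [card_quot_smul_eq_card_projectivization,
      Projectivization.card_of_finrank F (V := F × F × F) (n := 3) (by simp)]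
    simp only [Finset.sum_range_succ, Finset.sum_range_zero, Nat.card_eq_fintype_card]
    ring

open Polynomial in
/-- For `F = 𝔽_q` of characteristic `≠ 2, 3` and `χ` irreducible, the projective group
`G = (𝔽_q P², ⊕)` (the quotient of `(𝔽_q³ \ {0}, ⊕)` by the scalar action of `𝔽_q*`)
is cyclic of order `q² + q + 1`: there is a generator `g` whose `⊕`-powers meet every
projective class, and the number of classes is `q² + q + 1`. -/
theorem stmt15 {F : Type*} [Field F] [Fintype F]
    (hchar2 : ringChar F ≠ 2) (hchar3 : ringChar F ≠ 3) (c₁ c₂ c₃ : F)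
    (hirr : Irreducible (X ^ 3 - C c₁ * X ^ 2 - C c₂ * X - C c₃)) :
    (∃ g : F × F × F, g ≠ 0 ∧ ∀ h : F × F × F, h ≠ 0 →
        ∃ (n : ℕ) (lam : F), lam ≠ 0 ∧ lam • opow c₁ c₂ c₃ n g = h) ∧
    Nat.card (Quot fun a b : {x : F × F × F // x ≠ 0} =>
        ∃ lam : F, lam ≠ 0 ∧ lam • a.val = b.val) =
      Fintype.card F ^ 2 + Fintype.card F + 1 :=
  stmt15_general c₁ c₂ c₃ hirr
end
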